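/- arXiv:math/0012125 — 5 statements merged into one kernel-verified Lean document; each statement's English description precedes it below -/
import Mathlib

section
/- Let X and Y be dense subsets of the interval [0,1], let n be a natural number, let f₁,…,fₙ be continuous complex-valued functions on [0,1], and let ψᵢ : X → ℂ and φᵢ : Y → ℂ (1 ≤ i ≤ n) be arbitrary functions. If there is a constant c ∈ ℂ such that ∑_{i=1}^n ψᵢ(x)·φᵢ(y)·(fᵢ(x) − fᵢ(y)) = c for all x ∈ X and y ∈ Y, then c = 0. -/
/-!
Write `G y t := (φᵢ(y) (fᵢ(t) - fᵢ(y)))ᵢ ∈ ℂⁿ`, so that the hypothesis says that the linear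
functional `ℓₓ := ⟨ψ(x), ·⟩` takes the value `c` on every `G y x` with `y ∈ Y`, while
`G y` is continuous and vanishes at `y`. Suppose `c ≠ 0` and choose `y₁, …, y_r ∈ Y` and `t₀`
with `G y₁ t₀, …, G y_r t₀` linearly independent and `r` maximal. Independence is an open
condition, so it persists at some `y ∈ Y` near `t₀`; there the vectors `G yᵢ y - G y y` are
independent, and hence so are `G yᵢ x - G y x` for some `x ∈ X` near `y`. Since `ℓₓ` equals
`c ≠ 0` on all `G · x`, this makes the `r + 1` vectors `G y x, G y₁ x, …, G y_r x` independent,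
contradicting the maximality of `r`.
-/

theorem linearIndependent_cons_of_linearIndependent_sub {K V : Type*} [DivisionRing K]
    [AddCommGroup V] [Module K V] {r : ℕ} (ℓ : V →ₗ[K] K) {c : K} (hc : c ≠ 0) {w : V}
    {u : Fin r → V} (hw : ℓ w = c) (hu : ∀ i, ℓ (u i) = c)
    (hind : LinearIndependent K fun i => u i - w) :
    LinearIndependent K (Fin.cons w u : Fin (r + 1) → V) := by
  rw [Fintype.linearIndependent_iff]
  intro g hg
  simp only [Fin.sum_univ_succ, Fin.cons_zero, Fin.cons_succ] at hg
  have hsum : g 0 + ∑ i : Fin r, g i.succ = 0 := by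
    have := congrArg ℓ hg
    simp only [map_add, map_sum, map_smul, hw, hu, smul_eq_mul, map_zero, ← Finset.sum_mul,
      ← add_mul] at this
    exact (mul_eq_zero.mp this).resolve_right hc
  have htail : ∀ i : Fin r, g i.succ = 0 := by
    refine Fintype.linearIndependent_iff.mp hind (fun i => g i.succ) ?_
    simp only [smul_sub, Finset.sum_sub_distrib, ← Finset.sum_smul,
      eq_neg_of_add_eq_zero_right hsum, neg_smul, sub_neg_eq_add]
    rwa [add_comm]
  intro i
  refine Fin.cases ?_ htail i
  simpa [htail] using hsum

theorem exists_linearIndependent_fin_maximal {T ι K V : Type*} [DivisionRing K] [AddCommGroup V]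
    [Module K V] [FiniteDimensional K V] [Nonempty T] (v : T → ι → V) :
    ∃ (r : ℕ) (t₀ : T) (s : Fin r → ι), LinearIndependent K (v t₀ ∘ s) ∧
      ∀ (t : T) (s' : Fin (r + 1) → ι), ¬ LinearIndependent K (v t ∘ s') := by
  classical
  let P : ℕ → Prop := fun k => ∃ (t : T) (s : Fin k → ι), LinearIndependent K (v t ∘ s)
  have hP0 : P 0 := ⟨Classical.arbitrary T, Fin.elim0, linearIndependent_empty_type⟩
  have hbound : ∀ k, P k → k ≤ Module.finrank K V := fun k ⟨_, _, hli⟩ => by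
    simpa using hli.fintype_card_le_finrank
  obtain ⟨t₀, s, hli⟩ := Nat.findGreatest_spec (n := Module.finrank K V) (Nat.zero_le _) hP0
  refine ⟨_, t₀, s, hli, fun t s' hli' => ?_⟩
  have hP : P _ := ⟨t, s', hli'⟩
  have := Nat.le_findGreatest (hbound _ hP) hP
  omega

theorem eq_zero_of_forall_dense_apply_eq {𝕜 T V : Type*} [NontriviallyNormedField 𝕜]
    [CompleteSpace 𝕜] [NormedAddCommGroup V] [NormedSpace 𝕜 V] [FiniteDimensional 𝕜 V]
    [TopologicalSpace T] [Nonempty T] {X Y : Set T} (hX : Dense X) (hY : Dense Y) (G : T → T → V)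
    (hG : ∀ y, Continuous (G y)) (hGdiag : ∀ y, G y y = 0) (ℓ : T → V →ₗ[𝕜] 𝕜) {c : 𝕜}
    (h : ∀ x ∈ X, ∀ y ∈ Y, ℓ x (G y x) = c) : c = 0 := by
  by_contra hc
  obtain ⟨r, t₀, ys, hind₀, hmax⟩ :=
    exists_linearIndependent_fin_maximal (K := 𝕜) fun t (y : Y) => G y t
  have isOpen_indep : ∀ w : T → Fin r → V, Continuous w →
      IsOpen {t | LinearIndependent 𝕜 (w t)} := fun w hw =>
    isOpen_setOfPred_linearIndependent.preimage hw
  obtain ⟨y, hyY, hyU⟩ := hY.exists_mem_open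
    (isOpen_indep _ (continuous_pi fun i => hG (ys i))) ⟨t₀, hind₀⟩
  obtain ⟨x, hxX, hxU⟩ := hX.exists_mem_open
    (isOpen_indep (fun t i => G (ys i) t - G y t)
      (continuous_pi fun i => (hG (ys i)).sub (hG y))) ⟨y, by simpa [hGdiag] using hyU⟩
  refine hmax x (Fin.cons ⟨y, hyY⟩ ys) ?_
  rw [Fin.comp_cons]
  exact linearIndependent_cons_of_linearIndependent_sub (ℓ x) hc (h x hxX y hyY)
    (fun i => h x hxX _ (ys i).2) hxU

/-- If `X` and `Y` are dense subsets of `[0,1]`, `f i` are continuous complex functions on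
`[0,1]`, `ψ i : X → ℂ` and `φ i : Y → ℂ` arbitrary functions, and
`∑ i, ψ i x * φ i y * (f i x - f i y) = c` for all `x ∈ X`, `y ∈ Y`, then `c = 0`. -/
theorem stmt0 (X Y : Set (Set.Icc (0:ℝ) 1)) (hX : Dense X) (hY : Dense Y)
    (n : ℕ) (f : Fin n → C(Set.Icc (0:ℝ) 1, ℂ))
    (ψ φ : Fin n → Set.Icc (0:ℝ) 1 → ℂ) (c : ℂ)
    (h : ∀ x ∈ X, ∀ y ∈ Y, ∑ i, ψ i x * φ i y * (f i x - f i y) = c) :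
    c = 0 := by
  refine eq_zero_of_forall_dense_apply_eq hX hY (fun y t i => φ i y * (f i t - f i y))
    (fun y => continuous_pi fun i => continuous_const.mul ((f i).continuous.sub continuous_const))
    (fun y => funext fun i => by simp)
    (fun x => Fintype.linearCombination ℂ fun i => ψ i x) fun x hx y hy => ?_
  rw [Fintype.linearCombination_apply, ← h x hx y hy]
  exact Finset.sum_congr rfl fun i _ => by simp only [smul_eq_mul]; ring
end

section
/- Let X = {aₙ} and Y = {bₙ} be two disjoint dense countable subsets of [0,1], and let α, β ∈ c₀(ℕ,ℂ) be sequences all of whose terms are non-zero. Then there do NOT exist a natural number k, continuous functions f₁,…,f_k ∈ C([0,1]), and sequences α¹,…,αᵏ, β¹,…,βᵏ ∈ c₀(ℕ,ℂ) such that αₙ·βₘ = ∑_{i=1}^k αⁱₙ·βⁱₘ·(fᵢ(aₙ) − fᵢ(bₘ)) for all n, m ∈ ℕ. -/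
/-!
Put `vₜ(i)(m) = Bᵢ(m) (fᵢ(t) - fᵢ(bₘ))`. The identity says that `β` lies in the span of the rows
`v_{aₙ}(i)` for every `n`, whereas column `m` of the rows `v_{bₘ}(i)` vanishes although `βₘ ≠ 0`.
Choose `t₀` where the rows have maximal rank `r`, and an `r × r` minor `g` with `g(t₀) ≠ 0`.
Bordering it by the row `β` and any column `m` gives a continuous `(r+1) × (r+1)` minor that
vanishes at every `aₙ` (the rank is at most `r` there), hence everywhere by density; at `t = bₘ`
it equals `βₘ g(bₘ)`. So `g` vanishes at every `bₘ`, contradicting the density of `{bₘ}` in the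
open set `{g ≠ 0}`.
-/

open Module Submodule Set
open scoped ZeroAtInfty

section

variable {K : Type*} [Field K] {κ : Type*}

theorem LinearIndependent.exists_det_submatrix_ne_zero {r : ℕ} {w : Fin r → κ → K}
    (hw : LinearIndependent K w) :
    ∃ cols : Fin r → κ, ((Matrix.of w).submatrix id cols).det ≠ 0 := by
  let c : κ → Fin r → K := fun m p => w p m
  -- a functional vanishing on every column `c m` is a linear relation among the rows `w p`
  have hspan : span K (range c) = ⊤ := by
    by_contra hne
    obtain ⟨φ, hφ, hφc⟩ :=
      exists_dual_map_eq_bot_of_lt_top (lt_top_iff_ne_top.mpr hne) inferInstance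
    refine hφ (LinearMap.pi_ext' fun p => LinearMap.ext_ring ?_)
    refine Fintype.linearIndependent_iff.mp hw (fun p => φ (Pi.single p 1)) (funext fun m => ?_) p
    have hm := mem_map_of_mem (f := φ) (subset_span (mem_range_self (f := c) m))
    rw [hφc, mem_bot] at hm
    calc (∑ p, φ (Pi.single p 1) • w p) m = φ (∑ p, c m p • Pi.single p 1) := by
          simp [Finset.sum_apply, map_sum, mul_comm, c]
      _ = 0 := by rwa [← pi_eq_sum_univ']
  obtain ⟨ι, a, -, hsp, hli⟩ := exists_linearIndependent' K c
  let e : Fin r ≃ ι := (Pi.basisFun K (Fin r)).indexEquiv (Basis.mk hli (by rw [hsp, hspan]))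
  refine ⟨a ∘ e, fun h0 => ?_⟩
  have hunit : IsUnit ((Matrix.of w).submatrix id (a ∘ e)) :=
    Matrix.linearIndependent_cols_iff_isUnit.mp (hli.comp e e.injective)
  exact (Matrix.isUnit_iff_isUnit_det _).mp hunit |>.ne_zero h0

theorem det_submatrix_eq_zero_of_not_linearIndependent {n : ℕ} {w : Fin n → κ → K}
    (hw : ¬ LinearIndependent K w) (cols : Fin n → κ) :
    ((Matrix.of w).submatrix id cols).det = 0 := by
  by_contra h0
  have hrows := Matrix.linearIndependent_rows_iff_isUnit.mpr
    ((Matrix.isUnit_iff_isUnit_det _).mpr (Ne.isUnit h0))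
  exact hw (LinearIndependent.of_comp (LinearMap.funLeft K K cols) hrows)

theorem Matrix.det_succ_eq_mul_of_column_zero {R : Type*} [CommRing R] {n : ℕ}
    (A : Matrix (Fin (n + 1)) (Fin (n + 1)) R) (h : ∀ i : Fin n, A i.succ 0 = 0) :
    A.det = A 0 0 * (A.submatrix Fin.succ Fin.succ).det := by
  simp [Matrix.det_succ_column_zero A, Fin.sum_univ_succ, h]

theorem not_linearIndependent_of_finrank_span_lt {V ι : Type*} [AddCommGroup V] [Module K V]
    [Finite ι] {n : ℕ} {u : Fin n → V} {w : ι → V} (hu : ∀ p, u p ∈ span K (range w))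
    (hlt : finrank K (span K (range w)) < n) : ¬ LinearIndependent K u := by
  intro hli
  have := FiniteDimensional.span_of_finite K (finite_range w)
  have hle : span K (range u) ≤ span K (range w) := span_le.mpr (range_subset_iff.mpr hu)
  have := Submodule.finrank_mono hle
  rw [finrank_span_eq_card hli, Fintype.card_fin] at this
  omega

theorem exists_linearIndependent_comp_forall_finrank_span_le {T V ι : Type*} [Nonempty T]
    [AddCommGroup V] [Module K V] [Finite ι] (v : T → ι → V) :
    ∃ (r : ℕ) (t₀ : T) (J : Fin r → ι), LinearIndependent K (v t₀ ∘ J) ∧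
      ∀ t, finrank K (span K (range (v t))) ≤ r := by
  have := Fintype.ofFinite ι
  let ρ : T → ℕ := fun t => finrank K (span K (range (v t)))
  have : Finite (range ρ) := ((finite_Iic (Fintype.card ι)).subset <| range_subset_iff.mpr
    fun t => finrank_range_le_card (v t)).to_subtype
  obtain ⟨⟨_, t₀, rfl⟩, ht₀⟩ := Finite.exists_max (Subtype.val : range ρ → ℕ)
  obtain ⟨κ, a, ha, hsp, hli⟩ := exists_linearIndependent' K (v t₀)
  have := Finite.of_injective a ha
  have := Fintype.ofFinite κ
  refine ⟨Fintype.card κ, t₀, a ∘ (Fintype.equivFin κ).symm,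
    hli.comp _ (Fintype.equivFin κ).symm.injective, fun t => ?_⟩
  rw [← finrank_span_eq_card hli, hsp]
  exact ht₀ ⟨ρ t, t, rfl⟩

theorem exists_isOpen_forall_eq_zero_of_dense_mem_span {T ι : Type*} [TopologicalSpace K]
    [IsTopologicalRing K] [T1Space K] [TopologicalSpace T] [Nonempty T] [Finite ι]
    (v : T → ι → κ → K) (hv : ∀ i m, Continuous fun t => v t i m) (x : κ → K)
    {S : Set T} (hS : Dense S) (hx : ∀ t ∈ S, x ∈ span K (range (v t))) :
    ∃ U : Set T, IsOpen U ∧ U.Nonempty ∧ ∀ t ∈ U, ∀ m, (∀ i, v t i m = 0) → x m = 0 := by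
  obtain ⟨r, t₀, J, hJ, hrank⟩ := exists_linearIndependent_comp_forall_finrank_span_le (K := K) v
  obtain ⟨cols, hcols⟩ := hJ.exists_det_submatrix_ne_zero
  let minor : T → K := fun t => ((Matrix.of (v t ∘ J)).submatrix id cols).det
  have hminor : Continuous minor :=
    Continuous.matrix_det (continuous_matrix fun p q => hv (J p) (cols q))
  refine ⟨{t | minor t ≠ 0}, isOpen_compl_singleton.preimage hminor, ⟨t₀, hcols⟩,
    fun t htU m hm => ?_⟩
  let bordered : T → K := fun t =>
    ((Matrix.of (Fin.cons x (v t ∘ J) : Fin (r + 1) → κ → K)).submatrix id (Fin.cons m cols)).det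
  have hbordered : Continuous bordered := by
    refine Continuous.matrix_det (continuous_matrix fun p q => ?_)
    induction p using Fin.cases with
    | zero => exact continuous_const
    | succ p => exact hv (J p) _
  have hzero : S ⊆ bordered ⁻¹' {0} := by
    intro s hs
    have hrows : ∀ p, (Fin.cons x (v s ∘ J) : Fin (r + 1) → κ → K) p ∈ span K (range (v s)) :=
      Fin.cases (hx s hs) fun p => subset_span (mem_range_self (J p))
    have hdep := not_linearIndependent_of_finrank_span_lt hrows (Nat.lt_add_one_of_le (hrank s))
    exact det_submatrix_eq_zero_of_not_linearIndependent hdep (Fin.cons m cols)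
  have ht : bordered t = 0 :=
    closure_minimal hzero (isClosed_singleton.preimage hbordered) (hS.closure_eq ▸ mem_univ t)
  rw [show bordered t = x m * minor t from
    Matrix.det_succ_eq_mul_of_column_zero _ fun p => hm (J p)] at ht
  exact (mul_eq_zero.mp ht).resolve_right htU

end

theorem stmt2_general (a b : ℕ → Set.Icc (0:ℝ) 1) (ha : DenseRange a) (hb : DenseRange b)
    (α β : C₀(ℕ, ℂ)) (hα : ∀ n, α n ≠ 0) (hβ : ∀ n, β n ≠ 0) :
    ¬ ∃ (k : ℕ) (f : Fin k → C(Set.Icc (0:ℝ) 1, ℂ)) (A B : Fin k → C₀(ℕ, ℂ)),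
        ∀ n m : ℕ, α n * β m = ∑ i, A i n * B i m * (f i (a n) - f i (b m)) := by
  rintro ⟨k, f, A, B, h⟩
  let v : Set.Icc (0:ℝ) 1 → Fin k → ℕ → ℂ := fun t i m => B i m * (f i t - f i (b m))
  have hmem : ∀ t ∈ range a, ⇑β ∈ span ℂ (range (v t)) := by
    rintro _ ⟨n, rfl⟩
    refine (mem_span_range_iff_exists_fun ℂ).mpr ⟨fun i => A i n / α n, funext fun m => ?_⟩
    calc (∑ i, (A i n / α n) • v (a n) i) m
        = (∑ i, A i n * B i m * (f i (a n) - f i (b m))) / α n := by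
          simp only [Finset.sum_apply, Pi.smul_apply, smul_eq_mul, Finset.sum_div, v]
          exact Finset.sum_congr rfl fun i _ => by ring
      _ = β m := by rw [← h, mul_div_cancel_left₀ _ (hα n)]
  obtain ⟨U, hU, hUne, hUzero⟩ := exists_isOpen_forall_eq_zero_of_dense_mem_span v
    (fun i m => continuous_const.mul ((f i).continuous.sub continuous_const)) β ha hmem
  obtain ⟨m, hm⟩ := hb.exists_mem_open hU hUne
  exact hβ m (hUzero _ hm m fun i => by simp [v])

/-- For disjoint dense sequences `{aₙ}, {bₙ} ⊆ [0,1]` and sequences `α, β ∈ c₀(ℕ, ℂ)` with all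
terms nonzero, there is no finite family `fᵢ ∈ C([0,1])`, `αⁱ, βⁱ ∈ c₀` with
`αₙβₘ = ∑ᵢ αⁱₙ βⁱₘ (fᵢ(aₙ) - fᵢ(bₘ))` for all `n, m`; i.e. `α ⊗ β ∉ I(A,B)`. -/
theorem stmt2 (a b : ℕ → Set.Icc (0:ℝ) 1) (ha : DenseRange a) (hb : DenseRange b)
    (hdisj : Disjoint (Set.range a) (Set.range b))
    (α β : C₀(ℕ, ℂ)) (hα : ∀ n, α n ≠ 0) (hβ : ∀ n, β n ≠ 0) :
    ¬ ∃ (k : ℕ) (f : Fin k → C(Set.Icc (0:ℝ) 1, ℂ)) (A B : Fin k → C₀(ℕ, ℂ)),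
        ∀ n m : ℕ, α n * β m = ∑ i, A i n * B i m * (f i (a n) - f i (b m)) :=
  stmt2_general a b ha hb α β hα hβ
end

section
/- Let A be a C*-algebra and let φ be a unital *-homomorphism from C(X) (X a compact Hausdorff space) into the center of the multiplier algebra of A. For x ∈ X let A_x be the quotient of A by the closed two-sided ideal generated by {φ(f)·a : f ∈ C(X), f(x) = 0, a ∈ A}. Then for every a ∈ A, the norm of the image a_x of a in A_x equals inf{‖(1 − φ(f) + f(x))·a‖ : f ∈ C(X)}. -/
/-!
Substituting `g = 1 - f + f(x)`, the right-hand side is the infimum of `‖φ(g) a‖` over the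
`g ∈ C(X)` with `g(x) = 1`. For such `g`, `a - φ(g) a = φ(1 - g) a` lies in the ideal, which
gives one inequality. For the other, say `c` vanishes at `x` if `‖φ(g) c‖` is arbitrarily small
for some `g` with `‖g‖ ≤ 1` and `g(x) = 1`. Such elements form a two-sided ideal (products of such
`g` are again such `g`, and `φ` is central), which contains every `φ(f) b` with `f(x) = 0`
(multiply by a bump `g` with `g·f` uniformly small). If `c` vanishes at `x`, then
`‖φ(g) a‖ ≤ ‖a - c‖ + ‖φ(g) c‖`, and the bound `⨅ ≤ ‖a - c‖` passes to the closure.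
-/

open MultiplierAlgebra Metric

namespace DoubleCentralizer

variable {A : Type*} [NonUnitalCStarAlgebra A]

lemma norm_fst_apply_le (m : 𝓜(ℂ, A)) (c : A) : ‖m.fst c‖ ≤ ‖m‖ * ‖c‖ :=
  norm_fst m ▸ m.fst.le_opNorm c

lemma fst_apply_mul (m : 𝓜(ℂ, A)) (c y : A) : m.fst (c * y) = m.fst c * y := by
  set z := m.fst (c * y) - m.fst c * y
  have hz : ∀ w : A, w * z = 0 := fun w => by
    rw [mul_sub, sub_eq_zero, ← m.central, ← mul_assoc, m.central, mul_assoc]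
  exact sub_eq_zero.mp <| (CStarRing.star_mul_self_eq_zero_iff z).mp (hz (star z))

lemma fst_apply_mul_of_commute (m : 𝓜(ℂ, A)) (y c : A) (h : Commute m (y : 𝓜(ℂ, A))) :
    m.fst (y * c) = y * m.fst c := by
  simpa using congr($(congrArg (fun n : 𝓜(ℂ, A) => n.fst) h.eq) c)

end DoubleCentralizer

namespace ContinuousMap

variable {X : Type*} [TopologicalSpace X] [CompactSpace X]

lemma exists_norm_mul_le_of_apply_eq_zero {f : C(X, ℂ)} {x : X} (hfx : f x = 0) {δ : ℝ}
    (hδ : 0 < δ) : ∃ g : C(X, ℂ), ‖g‖ ≤ 1 ∧ g x = 1 ∧ ‖g * f‖ ≤ δ := by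
  let r (y : X) : ℝ := max 0 (1 - ‖f y‖ / δ)
  have hr₀ (y : X) : 0 ≤ r y := le_max_left _ _
  have hr₁ (y : X) : r y ≤ 1 := max_le zero_le_one (sub_le_self _ (by positivity))
  have hrf (y : X) : r y * ‖f y‖ ≤ δ := by
    rcases le_total ‖f y‖ δ with h | h
    · exact (mul_le_of_le_one_left (norm_nonneg _) (hr₁ y)).trans h
    · rw [show r y = 0 from max_eq_left (by rwa [sub_nonpos, one_le_div hδ]), zero_mul]
      exact hδ.le
  refine ⟨⟨fun y => (r y : ℂ), by fun_prop⟩, (norm_le _ zero_le_one).2 fun y => ?_,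
    by simp [r, hfx], (norm_le _ hδ.le).2 fun y => ?_⟩
  · simpa [abs_of_nonneg (hr₀ y)] using hr₁ y
  · simpa [abs_of_nonneg (hr₀ y)] using hrf y

end ContinuousMap

section FiberNorm

variable {X : Type*} [TopologicalSpace X] {A : Type*} [NonUnitalCStarAlgebra A]
  (φ : C(X, ℂ) →⋆ₐ[ℂ] 𝓜(ℂ, A))

lemma map_mul_fst_apply (g h : C(X, ℂ)) (c : A) :
    (φ (g * h)).fst c = (φ g).fst ((φ h).fst c) := by
  rw [map_mul, DoubleCentralizer.mul_fst]
  rfl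

variable [CompactSpace X] (x : X)

lemma norm_map_fst_apply_le (g : C(X, ℂ)) (c : A) : ‖(φ g).fst c‖ ≤ ‖g‖ * ‖c‖ :=
  (DoubleCentralizer.norm_fst_apply_le _ c).trans <|
    mul_le_mul_of_nonneg_right (NonUnitalStarAlgHom.norm_apply_le φ g) (norm_nonneg c)

lemma norm_map_mul_fst_apply_le (g h : C(X, ℂ)) (c : A) :
    ‖(φ (g * h)).fst c‖ ≤ ‖g‖ * ‖(φ h).fst c‖ :=
  map_mul_fst_apply φ g h c ▸ norm_map_fst_apply_le φ g _

def VanishesAt (c : A) : Prop :=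
  ∀ ε > 0, ∃ g : C(X, ℂ), ‖g‖ ≤ 1 ∧ g x = 1 ∧ ‖(φ g).fst c‖ ≤ ε

variable {φ x}

lemma vanishesAt_zero : VanishesAt φ x 0 :=
  fun ε hε =>
    ⟨1, (ContinuousMap.norm_le _ zero_le_one).2 fun _ => by simp, rfl, by simpa using hε.le⟩

lemma VanishesAt.of_norm_le {c d : A} (hc : VanishesAt φ x c) {K : ℝ} (hK₀ : 0 ≤ K)
    (hK : ∀ g, ‖(φ g).fst d‖ ≤ K * ‖(φ g).fst c‖) : VanishesAt φ x d := by
  intro ε hε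
  obtain ⟨g, hg, hgx, hgc⟩ := hc (ε / (K + 1)) (by positivity)
  refine ⟨g, hg, hgx, (hK g).trans ?_⟩
  calc K * ‖(φ g).fst c‖ ≤ (K + 1) * (ε / (K + 1)) := by gcongr; linarith
    _ = ε := by field_simp

lemma VanishesAt.neg {c : A} (hc : VanishesAt φ x c) : VanishesAt φ x (-c) :=
  hc.of_norm_le zero_le_one fun g => by simp

lemma VanishesAt.mul_right {c : A} (hc : VanishesAt φ x c) (w : A) : VanishesAt φ x (c * w) :=
  hc.of_norm_le (norm_nonneg w) fun g => by
    rw [DoubleCentralizer.fst_apply_mul, mul_comm ‖w‖]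
    exact norm_mul_le _ _

lemma VanishesAt.mul_left (hφ : ∀ f m, φ f * m = m * φ f) {c : A} (hc : VanishesAt φ x c)
    (w : A) : VanishesAt φ x (w * c) :=
  hc.of_norm_le (norm_nonneg w) fun g => by
    rw [DoubleCentralizer.fst_apply_mul_of_commute _ _ _ (hφ g w)]
    exact norm_mul_le _ _

lemma VanishesAt.add {c d : A} (hc : VanishesAt φ x c) (hd : VanishesAt φ x d) :
    VanishesAt φ x (c + d) := by
  intro ε hε
  obtain ⟨g, hg, hgx, hgc⟩ := hc (ε / 2) (by positivity)
  obtain ⟨h, hh, hhx, hhd⟩ := hd (ε / 2) (by positivity)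
  refine ⟨h * g, (norm_mul_le _ _).trans (mul_le_one₀ hh (norm_nonneg _) hg),
    by simp [hgx, hhx], ?_⟩
  calc ‖(φ (h * g)).fst (c + d)‖ ≤ ‖(φ (h * g)).fst c‖ + ‖(φ (g * h)).fst d‖ := by
        rw [map_add, mul_comm g]; exact norm_add_le _ _
    _ ≤ ‖h‖ * ‖(φ g).fst c‖ + ‖g‖ * ‖(φ h).fst d‖ := by
        gcongr <;> apply norm_map_mul_fst_apply_le
    _ ≤ 1 * (ε / 2) + 1 * (ε / 2) := by gcongr
    _ = ε := by ring

lemma vanishesAt_map_fst_of_apply_eq_zero {f : C(X, ℂ)} (hfx : f x = 0) (b : A) :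
    VanishesAt φ x ((φ f).fst b) := by
  intro ε hε
  have hδ : 0 < ε / (‖b‖ + 1) := by positivity
  obtain ⟨g, hg, hgx, hgf⟩ := ContinuousMap.exists_norm_mul_le_of_apply_eq_zero hfx hδ
  refine ⟨g, hg, hgx, ?_⟩
  calc ‖(φ g).fst ((φ f).fst b)‖ ≤ ‖g * f‖ * ‖b‖ := by
        rw [← map_mul_fst_apply]; exact norm_map_fst_apply_le φ _ b
    _ ≤ ε / (‖b‖ + 1) * (‖b‖ + 1) := by gcongr; linarith
    _ = ε := by field_simp

lemma iInf_norm_one_sub_add_smul_fst_eq (a : A) :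
    ⨅ f : C(X, ℂ), ‖((1 : 𝓜(ℂ, A)) - φ f + f x • 1).fst a‖ =
      ⨅ g : {g : C(X, ℂ) // g x = 1}, ‖(φ g).fst a‖ := by
  refine Function.Surjective.iInf_congr
    (fun f : C(X, ℂ) => (⟨1 - f + f x • 1, by simp⟩ : {g : C(X, ℂ) // g x = 1}))
    (fun g => ⟨1 - g, Subtype.ext (by simp [g.2])⟩) fun f => ?_
  simp

lemma iInf_norm_fst_le_dist_of_vanishesAt (a : A) {c : A} (hc : VanishesAt φ x c) :
    ⨅ g : {g : C(X, ℂ) // g x = 1}, ‖(φ g).fst a‖ ≤ dist a c := by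
  refine le_of_forall_pos_le_add fun ε hε => ?_
  obtain ⟨g, hg, hgx, hgc⟩ := hc ε hε
  have hbdd : BddBelow (Set.range fun g : {g : C(X, ℂ) // g x = 1} => ‖(φ g).fst a‖) :=
    ⟨0, Set.forall_mem_range.2 fun _ => norm_nonneg _⟩
  calc ⨅ g : {g : C(X, ℂ) // g x = 1}, ‖(φ g).fst a‖
      ≤ ‖(φ g).fst a‖ := ciInf_le hbdd ⟨g, hgx⟩
    _ ≤ ‖(φ g).fst (a - c)‖ + ‖(φ g).fst c‖ := by
        simpa using norm_add_le ((φ g).fst (a - c)) ((φ g).fst c)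
    _ ≤ 1 * ‖a - c‖ + ε := by
        gcongr; exact (norm_map_fst_apply_le φ g _).trans (by gcongr)
    _ = dist a c + ε := by rw [one_mul, dist_eq_norm]

end FiberNorm

theorem stmt3_general (X : Type*) [TopologicalSpace X] [CompactSpace X]
    (A : Type*) [NonUnitalCStarAlgebra A]
    (φ : C(X, ℂ) →⋆ₐ[ℂ] 𝓜(ℂ, A))
    (hφ : ∀ (f : C(X, ℂ)) (m : 𝓜(ℂ, A)), φ f * m = m * φ f)
    (x : X) (a : A) :
    infDist a (closure (TwoSidedIdeal.span
        {c : A | ∃ (f : C(X, ℂ)) (b : A), f x = 0 ∧ c = (φ f).fst b} : Set A))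
      = ⨅ f : C(X, ℂ), ‖((1 : 𝓜(ℂ, A)) - φ f + f x • 1).fst a‖ := by
  set I := TwoSidedIdeal.span {c : A | ∃ (f : C(X, ℂ)) (b : A), f x = 0 ∧ c = (φ f).fst b}
  have hI : ∀ c ∈ I, VanishesAt φ x c := fun c hc => by
    induction hc using TwoSidedIdeal.span_induction with
    | mem _ h => obtain ⟨f, b, hfx, rfl⟩ := h; exact vanishesAt_map_fst_of_apply_eq_zero hfx b
    | zero => exact vanishesAt_zero
    | add _ _ _ _ hc hd => exact hc.add hd
    | neg _ _ hc => exact hc.neg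
    | left_absorb w _ _ hc => exact hc.mul_left hφ w
    | right_absorb w _ _ hc => exact hc.mul_right w
  rw [iInf_norm_one_sub_add_smul_fst_eq]
  have : Nonempty {g : C(X, ℂ) // g x = 1} := ⟨⟨1, rfl⟩⟩
  refine le_antisymm (le_ciInf fun g => ?_)
    ((le_infDist ⟨0, subset_closure (zero_mem I)⟩).2 fun c hc => ?_)
  · have hmem : (φ (1 - g)).fst a ∈ closure (I : Set A) :=
      subset_closure (TwoSidedIdeal.subset_span ⟨1 - g, a, by simp [g.2], rfl⟩)
    simpa [dist_eq_norm] using infDist_le_dist_of_mem (x := a) hmem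
  · exact closure_minimal (fun d hd => iInf_norm_fst_le_dist_of_vanishesAt a (hI d hd))
      (isClosed_le continuous_const (continuous_const.dist continuous_id)) hc

/-- For a `C(X)`-algebra `A` (given by a unital *-homomorphism `φ` from `C(X)` into the
center of the multiplier algebra of `A`), the norm of the image of `a` in the fiber
`A_x = A / cl(C_x(X)·A)` (i.e. the distance from `a` to the closed two-sided ideal generated
by `C_x(X)·A`) equals `inf { ‖(1 - φ(f) + f(x))·a‖ : f ∈ C(X) }`. -/
theorem stmt3 (X : Type*) [TopologicalSpace X] [CompactSpace X] [T2Space X]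
    (A : Type*) [NonUnitalCStarAlgebra A]
    (φ : C(X, ℂ) →⋆ₐ[ℂ] 𝓜(ℂ, A))
    (hφ : ∀ (f : C(X, ℂ)) (m : 𝓜(ℂ, A)), φ f * m = m * φ f)
    (x : X) (a : A) :
    infDist a (closure (TwoSidedIdeal.span
        {c : A | ∃ (f : C(X, ℂ)) (b : A), f x = 0 ∧ c = (φ f).fst b} : Set A))
      = ⨅ f : C(X, ℂ), ‖((1 : 𝓜(ℂ, A)) - φ f + f x • 1).fst a‖ :=
  stmt3_general X A φ hφ x a
end

section
/- Let A be a C*-algebra, h ∈ A a positive element, and a ∈ A with a*a ≤ h^{10}. Then a belongs to the closure of the right ideal a ∈ cl(A·h⁴) (equivalently, a = lim_{ε→0} a·h⁴·(h⁴+ε)⁻¹, so there is a well-defined element a' = "h^{-4}a" in the closure sense with a = a'·h⁴ whenever the functional calculus inverse exists fiberwise). -/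
/-!
If `star a * a ≤ star u * u`, then for every `g` also
`star (a - a g) * (a - a g) ≤ star (u - u g) * (u - u g)` (conjugate by `1 - g` in the
unitization), hence `‖a - a g‖ ≤ ‖u - u g‖`. With `u = h⁵` and `g = k u`, where
`k = m(u)` for `m(t) = t / (η² + t²)` (which vanishes at `0`, so `k ∈ A` although `A` may
be non-unital), the element `u - u g` is `f(u)` for
`f(t) = t η² / (η² + t²)`, which has sup norm at most `η / 2`. So `a` is within `η` of
`(a k h) h⁴`.
-/

section StarOrderedRing

variable {R : Type*} [NonUnitalRing R] [PartialOrder R] [StarRing R] [StarOrderedRing R]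

theorem star_sub_mul_mul_sub_mul_le {a b : R} (hab : star a * a ≤ star b * b) (g : R) :
    star (a - a * g) * (a - a * g) ≤ star (b - b * g) * (b - b * g) := by
  let Φ : R →+ R :=
    AddMonoidHom.mk' (fun v => v - star g * v - v * g + star g * v * g) fun v w => by noncomm_ring
  have hΦ : ∀ s : R, star (s - s * g) * (s - s * g) = Φ (star s * s) := fun s => by
    simp only [Φ, AddMonoidHom.mk'_apply, star_sub, star_mul]
    noncomm_ring
  obtain ⟨p, hp, hb⟩ := (StarOrderedRing.le_iff _ _).mp hab
  have hΦp : 0 ≤ Φ p := by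
    clear hb
    induction hp using AddSubmonoid.closure_induction with
    | mem _ hs =>
      obtain ⟨s, rfl⟩ := hs
      exact hΦ s ▸ star_mul_self_nonneg _
    | zero => simp
    | add _ _ _ _ hv hw => simpa using add_nonneg hv hw
  rw [hΦ, hΦ, hb, map_add]
  exact le_add_of_nonneg_right hΦp

end StarOrderedRing

section CStarAlgebra

variable {A : Type*} [NonUnitalCStarAlgebra A]

theorem IsSelfAdjoint.exists_norm_sub_mul_mul_lt {u : A} (hu : IsSelfAdjoint u) {η : ℝ}
    (hη : 0 < η) : ∃ k : A, ‖u - u * (k * u)‖ < η := by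
  let m : ℝ → ℝ := fun t => t / (η ^ 2 + t ^ 2)
  have hm : Continuous m := continuous_id.div (by fun_prop) fun t => by positivity
  refine ⟨cfcₙ m u, ?_⟩
  have hcfc : u - u * (cfcₙ m u * u) = cfcₙ (fun t => t - t * (m t * t)) u := by
    rw [cfcₙ_sub _ _ u, cfcₙ_mul _ _ u, cfcₙ_mul _ _ u, cfcₙ_id' ℝ u]
  have hbound : ∀ t : ℝ, ‖t - t * (m t * t)‖ ≤ η / 2 := fun t => by
    have hden : 0 < η ^ 2 + t ^ 2 := by positivity
    have : t - t * (m t * t) = t * η ^ 2 / (η ^ 2 + t ^ 2) := by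
      simp only [m]; field_simp; ring
    rw [this, Real.norm_eq_abs, abs_div, abs_mul, abs_of_pos hden, abs_sq,
      div_le_iff₀ hden, ← sq_abs t]
    nlinarith [mul_nonneg hη.le (sq_nonneg (|t| - η))]
  rw [hcfc]
  exact (norm_cfcₙ_le fun t _ => hbound t).trans_lt (half_lt_self hη)

variable [PartialOrder A] [StarOrderedRing A]

theorem norm_le_norm_of_star_mul_self_le {a b : A} (hab : star a * a ≤ star b * b) :
    ‖a‖ ≤ ‖b‖ := by
  have h := CStarAlgebra.norm_le_norm_of_nonneg_of_le (star_mul_self_nonneg a) hab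
  rwa [CStarRing.norm_star_mul_self, CStarRing.norm_star_mul_self,
    ← mul_self_le_mul_self_iff (norm_nonneg a) (norm_nonneg b)] at h

theorem norm_sub_mul_le_of_star_mul_self_le {a b : A} (hab : star a * a ≤ star b * b) (g : A) :
    ‖a - a * g‖ ≤ ‖b - b * g‖ :=
  norm_le_norm_of_star_mul_self_le (star_sub_mul_mul_sub_mul_le hab g)

end CStarAlgebra

/-- In a C*-algebra, if `0 ≤ h` and `a*a ≤ h^10`, then `a` lies in the closure of the
right ideal `A·h⁴`. (Powers written as iterated products since `A` need not be unital.) -/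
theorem stmt9 {A : Type*} [NonUnitalCStarAlgebra A] [PartialOrder A] [StarOrderedRing A]
    (h a : A) (hh : 0 ≤ h)
    (hle : star a * a ≤ h * h * h * h * h * h * h * h * h * h) :
    a ∈ closure {y : A | ∃ b : A, y = b * (h * h * h * h)} := by
  have hsa : IsSelfAdjoint h := .of_nonneg hh
  set u := h * h * h * h * h
  have hu : IsSelfAdjoint u := by
    simp only [u, IsSelfAdjoint, star_mul, hsa.star_eq, mul_assoc]
  have hau : star a * a ≤ star u * u := by
    rw [hu.star_eq]
    simpa only [u, mul_assoc] using hle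
  refine Metric.mem_closure_iff.mpr fun ε hε => ?_
  obtain ⟨k, hk⟩ := hu.exists_norm_sub_mul_mul_lt hε
  refine ⟨a * (k * u), ⟨a * k * h, by simp only [u, mul_assoc]⟩, ?_⟩
  rw [dist_eq_norm]
  exact (norm_sub_mul_le_of_star_mul_self_le hau _).trans_lt hk
end

section
/- Let A be a C*-algebra and K a set of pure states of A that is closed in the weak-* topology within the pure state space and invariant under the adjoint action of the unitary group (ω ↦ ω(u*·u)). Define K^⊥ = {a ∈ A : ω(a) = 0 for all ω ∈ K}. Then K^⊥ is a closed two-sided ideal of A. -/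
/-!
Fix `ω ∈ K` and `x ∈ K^⊥`. The annihilator `K^⊥` is a closed subspace invariant under
`a ↦ u* a u`; differentiating `t ↦ e^{-itb} x e^{itb}` at `0` shows that it contains the
commutators `x b - b x`, so `ω (x b) = ω (b x)` for all `b`: `x` lies in the centralizer of `ω`,
a closed `⋆`-subalgebra. For `h ≥ 0` in that centralizer, `b ↦ ω (h b)` is again positive, since
`ω (h a* a) = ω ((a √h)* (a √h))`. Applied to `‖c‖ ± c` for self-adjoint `c`, the two positive
functionals add up to `2‖c‖ ω`, so purity of `ω` makes them multiples of `ω`. Hence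
`ω (c y) = ω c ω y` on the whole centralizer, and in particular `ω (x y) = ω x ω y = 0` and
`ω (y x) = ω (x y) = 0`.
-/

open scoped ComplexOrder ComplexStarModule
open Complex

section Preannihilator

variable {𝕜 E : Type*} [NontriviallyNormedField 𝕜] [NormedAddCommGroup E] [NormedSpace 𝕜 E]

def preannihilator (K : Set (WeakDual 𝕜 E)) : Submodule 𝕜 E where
  carrier := {a | ∀ ω ∈ K, ω a = 0}
  zero_mem' ω _ := map_zero ω
  add_mem' ha hb ω hω := by rw [map_add, ha ω hω, hb ω hω, add_zero]
  smul_mem' c a ha ω hω := by rw [map_smul, ha ω hω, smul_zero]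

lemma isClosed_preannihilator (K : Set (WeakDual 𝕜 E)) : IsClosed (preannihilator K : Set E) := by
  change IsClosed {a | ∀ ω ∈ K, ω a = 0}
  simp only [Set.ofPred_forall]
  exact isClosed_biInter fun ω _ => isClosed_eq ω.toStrongDual.continuous continuous_const

end Preannihilator

section CStarAlgebra

variable {A : Type*} [CStarAlgebra A]

attribute [local instance] CStarAlgebra.spectralOrder CStarAlgebra.spectralOrderedRing

theorem commutator_mem_of_forall_unitary_conj_mem {S : Submodule ℂ A} (hS : IsClosed (S : Set A))
    (hconj : ∀ u ∈ unitary A, ∀ x ∈ S, star u * x * u ∈ S) {x : A} (hx : x ∈ S) (b : A) :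
    x * b - b * x ∈ S := by
  suffices hsa : ∀ b : A, IsSelfAdjoint b → x * b - b * x ∈ S by
    convert S.add_mem (hsa _ (ℜ b).2) (S.smul_mem I (hsa _ (ℑ b).2)) using 1
    conv_lhs => rw [← realPart_add_I_smul_imaginaryPart b]
    simp only [mul_add, add_mul, mul_smul_comm, smul_mul_assoc, smul_sub]
    abel
  intro b hb
  set m : A := I • b
  have hm : star m = -m := by simp [m, hb.star_eq]
  have hu : ∀ t : ℝ, NormedSpace.exp (t • m) ∈ unitary A := fun t => by
    convert (selfAdjoint.expUnitary (t • ⟨b, hb⟩)).2 using 2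
    simp [m, smul_comm t I b]
  have hderiv : HasDerivAt
      (fun t : ℝ => star (NormedSpace.exp (t • m)) * x * NormedSpace.exp (t • m))
      (I • (x * b - b * x)) 0 := by
    have hexp := hasDerivAt_exp_smul_const (𝕂 := ℝ) m 0
    refine ((hexp.star.mul_const x).mul hexp).congr_deriv ?_
    simp [hm, m, smul_sub]
    abel
  refine (S.smul_mem_iff I_ne_zero).mp <| hS.mem_of_tendsto hderiv.tendsto_slope_zero <|
    .of_forall fun t => ?_
  simp only [zero_add, zero_smul, NormedSpace.exp_zero, star_one, one_mul, mul_one]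
  exact S.smul_of_tower_mem _ (S.sub_mem (hconj _ (hu t) x hx) hx)

noncomputable def WeakDual.toPositiveLinearMap (σ : WeakDual ℂ A)
    (hσ : ∀ a : A, 0 ≤ σ (star a * a)) : A →ₚ[ℂ] ℂ :=
  .mk₀ (σ : A →L[ℂ] ℂ).toLinearMap fun x hx => by
    obtain ⟨s, rfl⟩ := CStarAlgebra.nonneg_iff_eq_star_mul_self.mp hx
    exact hσ s

lemma map_star_of_nonneg {σ : WeakDual ℂ A} (hσ : ∀ a : A, 0 ≤ σ (star a * a)) (a : A) :
    σ (star a) = star (σ a) :=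
  map_star (σ.toPositiveLinearMap hσ) a

lemma norm_apply_star_mul_le {σ : WeakDual ℂ A} (hσ : ∀ a : A, 0 ≤ σ (star a * a)) (a b : A) :
    ‖σ (star a * b)‖ ≤ √(σ (star a * a)).re * √(σ (star b * b)).re := by
  set f := σ.toPositiveLinearMap hσ
  have h := norm_inner_le_norm (𝕜 := ℂ) (f.toPreGNS a) (f.toPreGNS b)
  simp only [f.preGNS_inner_def, f.preGNS_norm_def, PositiveLinearMap.ofPreGNS_toPreGNS] at h
  exact h

lemma apply_eq_zero_of_map_one_eq_zero {σ : WeakDual ℂ A} (hσ : ∀ a : A, 0 ≤ σ (star a * a))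
    (h1 : σ 1 = 0) (a : A) : σ a = 0 := by
  simpa [h1] using norm_apply_star_mul_le hσ 1 a

lemma map_one_eq_re {σ : WeakDual ℂ A} (hσ : ∀ a : A, 0 ≤ σ (star a * a)) :
    σ 1 = (σ 1).re :=
  eq_re_of_ofReal_le (r := 0) (by simpa using hσ 1)

variable (A) in
def stateSpace : Set (WeakDual ℂ A) := {σ | (∀ a : A, 0 ≤ σ (star a * a)) ∧ σ 1 = 1}

lemma inv_smul_mem_stateSpace {σ : WeakDual ℂ A} (hσ : ∀ a : A, 0 ≤ σ (star a * a))
    (h1 : 0 < (σ 1).re) : (σ 1).re⁻¹ • σ ∈ stateSpace A := by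
  refine ⟨fun a => smul_nonneg (inv_nonneg.mpr h1.le) (hσ a), ?_⟩
  change (σ 1).re⁻¹ • σ 1 = 1
  rw [map_one_eq_re hσ, real_smul, ofReal_re, ← ofReal_mul, inv_mul_cancel₀ h1.ne', ofReal_one]

theorem apply_eq_map_one_mul_of_add_eq_smul {ω φ ψ : WeakDual ℂ A}
    (hω : ω ∈ Set.extremePoints ℝ (stateSpace A))
    (hφ : ∀ a : A, 0 ≤ φ (star a * a)) (hψ : ∀ a : A, 0 ≤ ψ (star a * a)) {C : ℝ}
    (hsum : ∀ a, φ a + ψ a = C * ω a) (y : A) : φ y = φ 1 * ω y := by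
  obtain ⟨⟨-, hω1⟩, hωext⟩ := hω
  have hts : (φ 1).re + (ψ 1).re = C := by simpa [hω1] using congrArg re (hsum 1)
  rcases (show 0 ≤ (φ 1).re by simpa using (hφ 1).1).eq_or_lt with ht0 | ht
  · have hφ0 := apply_eq_zero_of_map_one_eq_zero hφ (by rw [map_one_eq_re hφ, ← ht0]; simp)
    simp [hφ0]
  rcases (show 0 ≤ (ψ 1).re by simpa using (hψ 1).1).eq_or_lt with hs0 | hs
  · have hψ0 := apply_eq_zero_of_map_one_eq_zero hψ (by rw [map_one_eq_re hψ, ← hs0]; simp)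
    have hφC : ∀ a, φ a = C * ω a := fun a => by simpa [hψ0] using hsum a
    rw [hφC, hφC, hω1, mul_one]
  have hC : 0 < C := hts ▸ add_pos ht hs
  have hseg : ω ∈ openSegment ℝ ((φ 1).re⁻¹ • φ) ((ψ 1).re⁻¹ • ψ) := by
    refine ⟨(φ 1).re / C, (ψ 1).re / C, by positivity, by positivity, by field_simp; linarith,
      DFunLike.ext _ _ fun a => ?_⟩
    change ((φ 1).re / C) • (φ 1).re⁻¹ • φ a + ((ψ 1).re / C) • (ψ 1).re⁻¹ • ψ a = ω a
    have hcoef : ∀ r : ℝ, r ≠ 0 → r / C * r⁻¹ = C⁻¹ := fun r hr => by field_simp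
    rw [smul_smul, smul_smul, hcoef _ ht.ne', hcoef _ hs.ne', ← smul_add, hsum, real_smul,
      ← mul_assoc, ← ofReal_mul, inv_mul_cancel₀ hC.ne', ofReal_one, one_mul]
  have hφω := hωext (inv_smul_mem_stateSpace hφ ht) (inv_smul_mem_stateSpace hψ hs) hseg
  have hy : (φ 1).re⁻¹ • φ y = ω y := congrArg (· y) hφω
  rw [← hy, real_smul, ← mul_assoc, map_one_eq_re hφ, ofReal_re, ← ofReal_mul,
    mul_inv_cancel₀ ht.ne', ofReal_one, one_mul]

noncomputable def WeakDual.centralizer (ω : WeakDual ℂ A) (hω : ∀ a : A, 0 ≤ ω (star a * a)) :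
    StarSubalgebra ℂ A where
  carrier := {c | ∀ b, ω (c * b) = ω (b * c)}
  mul_mem' {c d} hc hd b := by rw [mul_assoc, hc, mul_assoc, hd, mul_assoc]
  add_mem' {c d} hc hd b := by rw [add_mul, mul_add, map_add, map_add, hc, hd]
  algebraMap_mem' r b := by rw [Algebra.commutes]
  star_mem' {c} hc b := by
    rw [← star_star b, ← star_mul, ← star_mul, map_star_of_nonneg hω, map_star_of_nonneg hω, hc]

lemma WeakDual.isClosed_centralizer (ω : WeakDual ℂ A) (hω : ∀ a : A, 0 ≤ ω (star a * a)) :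
    IsClosed (ω.centralizer hω : Set A) := by
  have hcont : Continuous ω := ω.toStrongDual.continuous
  change IsClosed {c | ∀ b, ω (c * b) = ω (b * c)}
  rw [Set.ofPred_forall]
  exact isClosed_iInter fun b => isClosed_eq (by fun_prop) (by fun_prop)

lemma WeakDual.apply_mul_star_mul_self_nonneg_of_mem_centralizer {ω : WeakDual ℂ A}
    {hω : ∀ a : A, 0 ≤ ω (star a * a)} {h : A} (hh : h ∈ ω.centralizer hω) (h0 : 0 ≤ h)
    (a : A) : 0 ≤ ω (h * (star a * a)) := by
  obtain ⟨s, hs, hsa, rfl⟩ : ∃ s ∈ ω.centralizer hω, IsSelfAdjoint s ∧ s * s = h := by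
    refine ⟨CFC.sqrt h, ?_, (CFC.sqrt_nonneg h).isSelfAdjoint, CFC.sqrt_mul_sqrt_self h h0⟩
    rw [CFC.sqrt_eq_real_sqrt h h0]
    exact cfcₙ_mem (hs := ω.isClosed_centralizer hω) _ hh
  convert hω (a * s) using 1
  rw [mul_assoc, hs, star_mul, hsa.star_eq]
  noncomm_ring

theorem apply_mul_eq_mul_apply_of_isSelfAdjoint {ω : WeakDual ℂ A}
    (hω : ω ∈ Set.extremePoints ℝ (stateSpace A)) {c : A} (hc : c ∈ ω.centralizer hω.1.1)
    (hsa : IsSelfAdjoint c) (y : A) : ω (c * y) = ω c * ω y := by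
  set r := algebraMap ℝ A ‖c‖
  have hr : r ∈ ω.centralizer hω.1.1 := by
    simp [r, IsScalarTower.algebraMap_apply ℝ ℂ A]
  have hr_mul : ∀ a, ω (r * a) = ‖c‖ * ω a := fun a => by
    rw [← Algebra.smul_def, ← coe_smul, map_smul, smul_eq_mul]
  let leftMul (h : A) : WeakDual ℂ A :=
    StrongDual.toWeakDual (ω.toStrongDual.comp (ContinuousLinearMap.mul ℂ A h))
  have leftMul_apply (h a : A) : leftMul h a = ω (h * a) := rfl
  have key := apply_eq_map_one_mul_of_add_eq_smul hω (φ := leftMul (r + c))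
    (ψ := leftMul (r - c)) (C := 2 * ‖c‖)
    (WeakDual.apply_mul_star_mul_self_nonneg_of_mem_centralizer (add_mem hr hc)
      (neg_le_iff_add_nonneg'.mp hsa.neg_algebraMap_norm_le_self))
    (WeakDual.apply_mul_star_mul_self_nonneg_of_mem_centralizer (sub_mem hr hc)
      (sub_nonneg.mpr hsa.le_algebraMap_norm_self))
    (fun a => by
      rw [leftMul_apply, leftMul_apply, add_mul, sub_mul, map_add, map_sub, hr_mul]
      push_cast
      ring) y
  rw [leftMul_apply, leftMul_apply, add_mul, add_mul, map_add, map_add, hr_mul, hr_mul, mul_one,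
    hω.1.2] at key
  linear_combination key

theorem apply_mul_eq_mul_apply_of_mem_centralizer {ω : WeakDual ℂ A}
    (hω : ω ∈ Set.extremePoints ℝ (stateSpace A)) {c : A} (hc : c ∈ ω.centralizer hω.1.1)
    (y : A) : ω (c * y) = ω c * ω y := by
  have hre : (ℜ c : A) ∈ ω.centralizer hω.1.1 := by
    rw [realPart_apply_coe, ← coe_smul]
    exact SMulMemClass.smul_mem _ (add_mem hc (star_mem hc))
  have him : (ℑ c : A) ∈ ω.centralizer hω.1.1 := by
    rw [imaginaryPart_apply_coe, ← coe_smul]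
    exact SMulMemClass.smul_mem _ (SMulMemClass.smul_mem _ (sub_mem hc (star_mem hc)))
  rw [← realPart_add_I_smul_imaginaryPart c]
  simp only [add_mul, smul_mul_assoc, map_add, map_smul, smul_eq_mul,
    apply_mul_eq_mul_apply_of_isSelfAdjoint hω hre (ℜ c).2,
    apply_mul_eq_mul_apply_of_isSelfAdjoint hω him (ℑ c).2]
  ring

lemma star_mul_mul_mem_preannihilator {K : Set (WeakDual ℂ A)}
    (hK : ∀ ω ∈ K, ∀ u ∈ unitary A, ∀ ω' : WeakDual ℂ A,
      (∀ a : A, ω' a = ω (star u * a * u)) → ω' ∈ K)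
    {u : A} (hu : u ∈ unitary A) {x : A} (hx : x ∈ preannihilator K) :
    star u * x * u ∈ preannihilator K := fun ω hω =>
  hx _ <| hK ω hω u hu (StrongDual.toWeakDual <|
    ω.toStrongDual.comp (ContinuousLinearMap.mulLeftRight ℂ A (star u) u)) fun _ => rfl

theorem mul_mem_preannihilator {K : Set (WeakDual ℂ A)}
    (hKpure : K ⊆ Set.extremePoints ℝ (stateSpace A))
    (hK : ∀ u ∈ unitary A, ∀ x ∈ preannihilator K, star u * x * u ∈ preannihilator K)
    {x : A} (hx : x ∈ preannihilator K) (y : A) :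
    x * y ∈ preannihilator K ∧ y * x ∈ preannihilator K := by
  have hxc : ∀ ω (hω : ω ∈ K), x ∈ ω.centralizer (hKpure hω).1.1 := fun ω hω b =>
    sub_eq_zero.mp <| by
      simpa using commutator_mem_of_forall_unitary_conj_mem (isClosed_preannihilator K) hK hx b
        ω hω
  have hxy : ∀ ω ∈ K, ω (x * y) = 0 := fun ω hω => by
    rw [apply_mul_eq_mul_apply_of_mem_centralizer (hKpure hω) (hxc ω hω), hx ω hω, zero_mul]
  exact ⟨hxy, fun ω hω => (hxc ω hω y).symm.trans (hxy ω hω)⟩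

end CStarAlgebra

theorem stmt13_general (A : Type*) [CStarAlgebra A]
    (pureStates : Set (WeakDual ℂ A))
    (hps : pureStates = Set.extremePoints ℝ
      {σ : WeakDual ℂ A | (∀ a : A, 0 ≤ σ (star a * a)) ∧ σ 1 = 1})
    (K : Set (WeakDual ℂ A)) (hKsub : K ⊆ pureStates)
    (hKinv : ∀ ω ∈ K, ∀ u ∈ unitary A, ∀ ω' : WeakDual ℂ A,
      (∀ a : A, ω' a = ω (star u * a * u)) → ω' ∈ K) :
    IsClosed {a : A | ∀ ω ∈ K, ω a = 0} ∧
      ∃ I : TwoSidedIdeal A, (I : Set A) = {a : A | ∀ ω ∈ K, ω a = 0} := by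
  subst hps
  have hconj : ∀ u ∈ unitary A, ∀ x ∈ preannihilator K, star u * x * u ∈ preannihilator K :=
    fun u hu x hx => star_mul_mul_mem_preannihilator hKinv hu hx
  exact ⟨isClosed_preannihilator K, TwoSidedIdeal.mk' _ (zero_mem (preannihilator K)) add_mem
    neg_mem (fun hy => (mul_mem_preannihilator hKsub hconj hy _).2)
    (fun hx => (mul_mem_preannihilator hKsub hconj hx _).1), TwoSidedIdeal.coe_mk' ..⟩

/-- If `K` is a set of pure states of a unital C*-algebra `A`, closed in the weak-* topology
within the pure state space and invariant under the adjoint action `ω ↦ ω(u* · u)` of the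
unitary group, then `K^⊥ = {a : ω(a) = 0 ∀ ω ∈ K}` is a closed two-sided ideal of `A`. -/
theorem stmt13 (A : Type*) [CStarAlgebra A]
    (pureStates : Set (WeakDual ℂ A))
    (hps : pureStates = Set.extremePoints ℝ
      {σ : WeakDual ℂ A | (∀ a : A, 0 ≤ σ (star a * a)) ∧ σ 1 = 1})
    (K : Set (WeakDual ℂ A)) (hKsub : K ⊆ pureStates)
    (hKclosed : ∀ ρ ∈ pureStates, ρ ∈ closure K → ρ ∈ K)
    (hKinv : ∀ ω ∈ K, ∀ u ∈ unitary A, ∀ ω' : WeakDual ℂ A,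
      (∀ a : A, ω' a = ω (star u * a * u)) → ω' ∈ K) :
    IsClosed {a : A | ∀ ω ∈ K, ω a = 0} ∧
      ∃ I : TwoSidedIdeal A, (I : Set A) = {a : A | ∀ ω ∈ K, ω a = 0} :=
  stmt13_general A pureStates hps K hKsub hKinv
end
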